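/- Let q ∈ [0,T−1] and suppose δ_q = 0 where δ_k = rank H_k − rank G_k, δ_{−1} = p. If an explaining system (A,B,C,D) ∈ 𝓔(ℓ,n) with lag ℓ exists for the data and T ≥ ℓ+1, then ℓ ≥ q, where q = min{k ∈ [0,T−1] : δ_k = 0}. -/

import Mathlib

open Matrix
noncomputable section

/-- `obsMat A C k` is the observability matrix Ω_k, the stack of C, CA, ..., CA^k. -/
def obsMat {ι : Type*} [Fintype ι] [DecidableEq ι] {p : ℕ}
    (A : Matrix ι ι ℝ) (C : Matrix (Fin p) ι ℝ) (k : ℕ) :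
    Matrix (Fin (k + 1) × Fin p) ι ℝ :=
  Matrix.of fun ir j => (C * A ^ (ir.1 : ℕ)) ir.2 j

/-- `obsRank A C (k+1) = rank Ω_k`; `obsRank A C 0 = rank Ω_{-1} = 0` (void matrix). -/
def obsRank {ι : Type*} [Fintype ι] [DecidableEq ι] {p : ℕ}
    (A : Matrix ι ι ℝ) (C : Matrix (Fin p) ι ℝ) : ℕ → ℕ
  | 0 => 0
  | k + 1 => (obsMat A C k).rank

/-- ρ_k = rank Ω_k − rank Ω_{k-1}. -/
def rho {ι : Type*} [Fintype ι] [DecidableEq ι] {p : ℕ}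
    (A : Matrix ι ι ℝ) (C : Matrix (Fin p) ι ℝ) (k : ℕ) : ℕ :=
  obsRank A C (k + 1) - obsRank A C k

/-- The lag ℓ(C,A): the smallest k ≥ 0 with rank Ω_k = rank Ω_{k-1}. -/
def lag {ι : Type*} [Fintype ι] [DecidableEq ι] {p : ℕ}
    (A : Matrix ι ι ℝ) (C : Matrix (Fin p) ι ℝ) : ℕ :=
  sInf {k | obsRank A C (k + 1) = obsRank A C k}

/-- (C,A) is observable iff rank Ω_{n-1} = n where n is the state dimension. -/
def Observable {ι : Type*} [Fintype ι] [DecidableEq ι] {p : ℕ}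
    (A : Matrix ι ι ℝ) (C : Matrix (Fin p) ι ℝ) : Prop :=
  obsRank A C (Fintype.card ι) = Fintype.card ι

/-- Block Hankel matrix of depth k+1 built from f_0, ..., f_{T-1}. -/
def hankel {r T : ℕ} (f : Fin T → Fin r → ℝ) (k : ℕ) :
    Matrix (Fin (k + 1) × Fin r) (Fin (T - k)) ℝ :=
  Matrix.of fun ia j =>
    f ⟨(ia.1 : ℕ) + (j : ℕ), by have h1 := ia.1.isLt; have h2 := j.isLt; omega⟩ ia.2

/-- H_k : Hankel matrix of depth k+1 of the stacked data (u; y). -/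
def Hmat {m p T : ℕ} (u : Fin T → Fin m → ℝ) (y : Fin T → Fin p → ℝ) (k : ℕ) :
    Matrix ((Fin (k + 1) × Fin m) ⊕ (Fin (k + 1) × Fin p)) (Fin (T - k)) ℝ :=
  Matrix.fromRows (hankel u k) (hankel y k)

/-- G_k : H_k with its last p rows (the y_k block) deleted. -/
def Gmat {m p T : ℕ} (u : Fin T → Fin m → ℝ) (y : Fin T → Fin p → ℝ) (k : ℕ) :
    Matrix ((Fin (k + 1) × Fin m) ⊕ (Fin k × Fin p)) (Fin (T - k)) ℝ :=
  Matrix.fromRows (hankel u k)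
    (Matrix.of fun ia j =>
      y ⟨(ia.1 : ℕ) + (j : ℕ), by have h1 := ia.1.isLt; have h2 := j.isLt; omega⟩ ia.2)

/-- δ_k = rank H_k − rank G_k. -/
def delta {m p T : ℕ} (u : Fin T → Fin m → ℝ) (y : Fin T → Fin p → ℝ) (k : ℕ) : ℕ :=
  (Hmat u y k).rank - (Gmat u y k).rank

/-- (A,B,C,D) explains the data (u,y) with state sequence x. -/
def Explains {ι : Type*} [Fintype ι] {m p T : ℕ}
    (A : Matrix ι ι ℝ) (B : Matrix ι (Fin m) ℝ)
    (C : Matrix (Fin p) ι ℝ) (D : Matrix (Fin p) (Fin m) ℝ)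
    (u : Fin T → Fin m → ℝ) (y : Fin T → Fin p → ℝ) (x : Fin (T + 1) → ι → ℝ) : Prop :=
  ∀ t : Fin T,
    x t.succ = A.mulVec (x t.castSucc) + B.mulVec (u t) ∧
    y t = C.mulVec (x t.castSucc) + D.mulVec (u t)

/-! If `G_k g = 0`, combining the columns of the data with the weights `g` gives states
`ξ_s = ∑_j g_j x_{s+j}` of a trajectory with zero input (the `u`-rows of `G_k`) whose first `k`
outputs `C ξ_s = C A^s ξ_0` vanish (the `y`-rows of `G_k`), so `ξ_0 ∈ ker Ω_{k-1}`. At `k = ℓ` this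
kernel is `ker Ω_ℓ`, hence the last output row `C A^ℓ ξ_0` of `H_ℓ g` vanishes as well. Thus
`ker G_ℓ ⊆ ker H_ℓ`, i.e. `δ_ℓ = 0`, and the minimality of `q` gives `q ≤ ℓ`. -/

lemma Matrix.rank_add_finrank_ker {K r o : Type*} [Field K] [Fintype o] (M : Matrix r o K) :
    M.rank + Module.finrank K (LinearMap.ker M.mulVecLin) = Fintype.card o := by
  rw [Matrix.rank, LinearMap.finrank_range_add_finrank_ker, Module.finrank_fintype_fun_eq_card]

lemma Matrix.rank_le_rank_of_ker_le {K r r' o : Type*} [Field K] [Fintype o]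
    (M : Matrix r o K) (N : Matrix r' o K)
    (h : LinearMap.ker N.mulVecLin ≤ LinearMap.ker M.mulVecLin) : M.rank ≤ N.rank := by
  have := Submodule.finrank_mono h
  have := M.rank_add_finrank_ker
  have := N.rank_add_finrank_ker
  omega

section Observability

variable {ι : Type*} [Fintype ι] [DecidableEq ι] {p : ℕ} (A : Matrix ι ι ℝ) (C : Matrix (Fin p) ι ℝ)

/-- The kernel of `Ω_{k-1}`, matching the indexing of `obsRank`. -/
def obsKer (k : ℕ) : Submodule ℝ (ι → ℝ) :=
  ⨅ i < k, LinearMap.ker (C * A ^ i).mulVecLin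

variable {A C} in
lemma mem_obsKer {k : ℕ} {v : ι → ℝ} : v ∈ obsKer A C k ↔ ∀ i < k, (C * A ^ i) *ᵥ v = 0 := by
  simp [obsKer]

lemma obsKer_antitone : Antitone (obsKer A C) := fun _ _ hkl _ hv =>
  mem_obsKer.2 fun i hi => mem_obsKer.1 hv i (hi.trans_le hkl)

lemma obsRank_add_finrank_obsKer (k : ℕ) :
    obsRank A C k + Module.finrank ℝ (obsKer A C k) = Fintype.card ι := by
  cases k with
  | zero =>
    have htop : obsKer A C 0 = ⊤ := eq_top_iff.2 fun v _ => mem_obsKer.2 (by simp)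
    rw [obsRank, htop, finrank_top, Module.finrank_fintype_fun_eq_card, zero_add]
  | succ k =>
    have hker : LinearMap.ker (obsMat A C k).mulVecLin = obsKer A C (k + 1) := by
      ext v
      simp only [LinearMap.mem_ker, Matrix.mulVecLin_apply, mem_obsKer]
      refine ⟨fun h i hi => funext fun a => congrFun h (⟨i, hi⟩, a),
        fun h => funext fun ia => congrFun (h ia.1 ia.1.isLt) ia.2⟩
    rw [obsRank, ← hker, Matrix.rank_add_finrank_ker]

lemma obsRank_mono : Monotone (obsRank A C) := fun k l hkl => by
  have := Submodule.finrank_mono (obsKer_antitone A C hkl)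
  have := obsRank_add_finrank_obsKer A C k
  have := obsRank_add_finrank_obsKer A C l
  omega

lemma obsKer_succ_eq_of_obsRank_succ_eq {k : ℕ} (h : obsRank A C (k + 1) = obsRank A C k) :
    obsKer A C (k + 1) = obsKer A C k := by
  refine Submodule.eq_of_le_of_finrank_le (obsKer_antitone A C k.le_succ) ?_
  have := obsRank_add_finrank_obsKer A C k
  have := obsRank_add_finrank_obsKer A C (k + 1)
  omega

lemma obsRank_lag_succ : obsRank A C (lag A C + 1) = obsRank A C (lag A C) := by
  refine Nat.sInf_mem (s := {k | obsRank A C (k + 1) = obsRank A C k}) ?_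
  by_contra hnone
  have hstrict : StrictMono (obsRank A C) := strictMono_nat_of_lt_succ fun k =>
    (obsRank_mono A C k.le_succ).lt_of_ne fun h => hnone ⟨k, h.symm⟩
  have hge : Fintype.card ι + 1 ≤ obsRank A C (Fintype.card ι + 1) := hstrict.id_le _
  have := obsRank_add_finrank_obsKer A C (Fintype.card ι + 1)
  omega

end Observability

section Windows

variable {T : ℕ}

def windowSum {V : Type*} [AddCommMonoid V] [Module ℝ V] (f : Fin T → V) (k : ℕ)
    (g : Fin (T - k) → ℝ) (s : Fin (k + 1)) : V :=
  ∑ j, g j • f ⟨s + j, by omega⟩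

lemma curry_hankel_mulVec {r : ℕ} (f : Fin T → Fin r → ℝ) (k : ℕ) (g : Fin (T - k) → ℝ)
    (s : Fin (k + 1)) : Function.curry (hankel f k *ᵥ g) s = windowSum f k g s := by
  ext c
  simp [hankel, mulVec, dotProduct, windowSum, Finset.sum_apply, mul_comm]

lemma windowSum_add {V : Type*} [AddCommMonoid V] [Module ℝ V] (f f' : Fin T → V) (k : ℕ)
    (g : Fin (T - k) → ℝ) (s : Fin (k + 1)) :
    windowSum (fun t => f t + f' t) k g s = windowSum f k g s + windowSum f' k g s := by
  simp [windowSum, smul_add, Finset.sum_add_distrib]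

lemma mulVec_windowSum {r r' : Type*} [Fintype r'] (M : Matrix r r' ℝ) (f : Fin T → r' → ℝ)
    (k : ℕ) (g : Fin (T - k) → ℝ) (s : Fin (k + 1)) :
    M *ᵥ windowSum f k g s = windowSum (fun t => M *ᵥ f t) k g s := by
  simp [windowSum, mulVec_sum, mulVec_smul]

end Windows

section Explains

variable {ι : Type*} [Fintype ι] {m p T : ℕ} {A : Matrix ι ι ℝ} {B : Matrix ι (Fin m) ℝ}
  {C : Matrix (Fin p) ι ℝ} {D : Matrix (Fin p) (Fin m) ℝ}
  {u : Fin T → Fin m → ℝ} {y : Fin T → Fin p → ℝ} {x : Fin (T + 1) → ι → ℝ}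

lemma Explains.windowSum_output (hE : Explains A B C D u y x) (k : ℕ) (g : Fin (T - k) → ℝ)
    (s : Fin (k + 1)) :
    windowSum y k g s =
      C *ᵥ windowSum (fun t => x t.castSucc) k g s + D *ᵥ windowSum u k g s := by
  rw [mulVec_windowSum, mulVec_windowSum, ← windowSum_add]
  congr
  exact funext fun t => (hE t).2

lemma Explains.windowSum_state_succ (hE : Explains A B C D u y x) (k : ℕ)
    (g : Fin (T - k) → ℝ) (i : Fin k) :
    windowSum (fun t => x t.castSucc) k g i.succ =
      A *ᵥ windowSum (fun t => x t.castSucc) k g i.castSucc + B *ᵥ windowSum u k g i.castSucc := by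
  rw [mulVec_windowSum, mulVec_windowSum, ← windowSum_add]
  refine Finset.sum_congr rfl fun j _ => ?_
  convert congrArg (g j • ·) (hE ⟨i + j, by omega⟩).1 using 3
  · ext
    simp only [Fin.val_succ, Fin.val_castSucc]
    omega
  · rfl

variable [DecidableEq ι]

lemma Explains.Hmat_mulVec_eq_zero (hE : Explains A B C D u y x) {k : ℕ}
    (hk : obsKer A C (k + 1) = obsKer A C k) {g : Fin (T - k) → ℝ}
    (hg : Gmat u y k *ᵥ g = 0) : Hmat u y k *ᵥ g = 0 := by
  rw [Gmat, fromRows_mulVec] at hg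
  have hu : hankel u k *ᵥ g = 0 := funext fun sc => congrFun hg (Sum.inl sc)
  have hy_init : ∀ i : Fin k, windowSum y k g i.castSucc = 0 := fun i => funext fun a => by
    simpa [windowSum, mulVec, dotProduct, Finset.sum_apply, mul_comm] using
      congrFun hg (Sum.inr (i, a))
  have hwu : ∀ s, windowSum u k g s = 0 := fun s => by rw [← curry_hankel_mulVec, hu]; rfl
  have hout (s) : windowSum y k g s = C *ᵥ windowSum (fun t => x t.castSucc) k g s := by
    rw [hE.windowSum_output, hwu, mulVec_zero, add_zero]
  have hstate (i : Fin k) : windowSum (fun t => x t.castSucc) k g i.succ =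
      A *ᵥ windowSum (fun t => x t.castSucc) k g i.castSucc := by
    rw [hE.windowSum_state_succ, hwu, mulVec_zero, add_zero]
  set ξ := windowSum (fun t => x t.castSucc) k g
  have hpow : ∀ s : Fin (k + 1), ξ s = A ^ (s : ℕ) *ᵥ ξ 0 := Fin.induction (by simp) fun i ih => by
    rw [hstate, ih, mulVec_mulVec, ← pow_succ']
    rfl
  have hξ : ξ 0 ∈ obsKer A C (k + 1) := hk ▸ mem_obsKer.2 fun i hi => by
    rw [← mulVec_mulVec, ← hpow ⟨i, by omega⟩, ← hout]
    exact hy_init ⟨i, hi⟩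
  have hy_all : ∀ s, windowSum y k g s = 0 := Fin.lastCases
    (by rw [hout, hpow, mulVec_mulVec]; exact mem_obsKer.1 hξ k k.lt_succ_self) hy_init
  rw [Hmat, fromRows_mulVec, hu]
  refine funext (Sum.rec (fun _ => rfl) fun sa => ?_)
  show Function.curry (hankel y k *ᵥ g) sa.1 sa.2 = 0
  rw [curry_hankel_mulVec, hy_all]
  rfl

lemma Explains.delta_eq_zero (hE : Explains A B C D u y x) {k : ℕ}
    (hk : obsRank A C (k + 1) = obsRank A C k) : delta u y k = 0 :=
  Nat.sub_eq_zero_of_le <| (Hmat u y k).rank_le_rank_of_ker_le (Gmat u y k) fun _ hg =>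
    hE.Hmat_mulVec_eq_zero (obsKer_succ_eq_of_obsRank_succ_eq A C hk) hg

end Explains

theorem stmt14_general {n m p T : ℕ}
    (u : Fin T → Fin m → ℝ) (y : Fin T → Fin p → ℝ)
    (q : ℕ)
    (hqmin : ∀ j < q, delta u y j ≠ 0)
    (A : Matrix (Fin n) (Fin n) ℝ) (B : Matrix (Fin n) (Fin m) ℝ)
    (C : Matrix (Fin p) (Fin n) ℝ) (D : Matrix (Fin p) (Fin m) ℝ)
    (x : Fin (T + 1) → Fin n → ℝ)
    (hE : Explains A B C D u y x) :
    q ≤ lag A C := by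
  by_contra! hlt
  exact hqmin _ hlt (hE.delta_eq_zero (obsRank_lag_succ A C))

theorem stmt14 {n m p T : ℕ}
    (u : Fin T → Fin m → ℝ) (y : Fin T → Fin p → ℝ)
    (q : ℕ) (hqT : q ≤ T - 1) (hq0 : delta u y q = 0)
    (hqmin : ∀ j < q, delta u y j ≠ 0)
    (A : Matrix (Fin n) (Fin n) ℝ) (B : Matrix (Fin n) (Fin m) ℝ)
    (C : Matrix (Fin p) (Fin n) ℝ) (D : Matrix (Fin p) (Fin m) ℝ)
    (x : Fin (T + 1) → Fin n → ℝ)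
    (hE : Explains A B C D u y x)
    (hT : lag A C + 1 ≤ T) :
    q ≤ lag A C :=
  stmt14_general u y q hqmin A B C D x hE
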